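/- Let G be a graph and x a vertex such that N_G(x) contains five vertices x_1, ..., x_5 with x_1x_2, x_2x_3, x_3x_4, x_4x_5 ∉ E(G) and x_1x_4, x_2x_5 ∈ E(G). Then G contains an induced K_{1,3}, an induced W_4, or an induced W_5, with center x. -/
import Mathlib


/-- `G` contains an induced claw `K_{1,3}` with center `x`. -/
def HasInducedClawAt {V : Type*} (G : SimpleGraph V) (x : V) : Prop :=
  ∃ a b c : V, a ≠ b ∧ a ≠ c ∧ b ≠ c ∧
    G.Adj x a ∧ G.Adj x b ∧ G.Adj x c ∧
    ¬ G.Adj a b ∧ ¬ G.Adj a c ∧ ¬ G.Adj b c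

/-- `G` contains an induced 4-wheel `W₄` with center `x`. -/
def HasInducedW4At {V : Type*} (G : SimpleGraph V) (x : V) : Prop :=
  ∃ a b c d : V, a ≠ c ∧ b ≠ d ∧
    G.Adj x a ∧ G.Adj x b ∧ G.Adj x c ∧ G.Adj x d ∧
    G.Adj a b ∧ G.Adj b c ∧ G.Adj c d ∧ G.Adj d a ∧
    ¬ G.Adj a c ∧ ¬ G.Adj b d

/-- `G` contains an induced 5-wheel `W₅` with center `x`. -/
def HasInducedW5At {V : Type*} (G : SimpleGraph V) (x : V) : Prop :=
  ∃ w : Fin 5 → V, Function.Injective w ∧ (∀ i, G.Adj x (w i)) ∧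
    (∀ i, G.Adj (w i) (w (i + 1))) ∧ (∀ i, ¬ G.Adj (w i) (w (i + 2)))

/-- Endgame (iv): forces an induced claw, `W₄` or `W₅` with center `x`. -/
theorem statement9 {V : Type*} (G : SimpleGraph V) (x x₁ x₂ x₃ x₄ x₅ : V)
    (h1 : G.Adj x x₁) (h2 : G.Adj x x₂) (h3 : G.Adj x x₃) (h4 : G.Adj x x₄) (h5 : G.Adj x x₅)
    (hne : Function.Injective ![x₁, x₂, x₃, x₄, x₅])
    (n12 : ¬ G.Adj x₁ x₂) (n23 : ¬ G.Adj x₂ x₃) (n34 : ¬ G.Adj x₃ x₄) (n45 : ¬ G.Adj x₄ x₅)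
    (e14 : G.Adj x₁ x₄) (e25 : G.Adj x₂ x₅) :
    HasInducedClawAt G x ∨ HasInducedW4At G x ∨ HasInducedW5At G x := by
  classical
  have hd : ∀ i j : Fin 5, i ≠ j → ![x₁, x₂, x₃, x₄, x₅] i ≠ ![x₁, x₂, x₃, x₄, x₅] j :=
    fun i j hij h => hij (hne h)
  have d12 : x₁ ≠ x₂ := hd 0 1 (by decide)
  have d13 : x₁ ≠ x₃ := hd 0 2 (by decide)
  have d23 : x₂ ≠ x₃ := hd 1 2 (by decide)
  have d24 : x₂ ≠ x₄ := hd 1 3 (by decide)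
  have d34 : x₃ ≠ x₄ := hd 2 3 (by decide)
  have d35 : x₃ ≠ x₅ := hd 2 4 (by decide)
  have d45 : x₄ ≠ x₅ := hd 3 4 (by decide)
  have d14 : x₁ ≠ x₄ := hd 0 3 (by decide)
  have d15 : x₁ ≠ x₅ := hd 0 4 (by decide)
  have d25 : x₂ ≠ x₅ := hd 1 4 (by decide)
  by_cases h13 : G.Adj x₁ x₃
  · by_cases h24 : G.Adj x₂ x₄
    · by_cases h35 : G.Adj x₃ x₅
      · by_cases h15 : G.Adj x₁ x₅
        · -- W4 : x₁ x₄ x₂ x₅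
          exact Or.inr (Or.inl ⟨x₁, x₄, x₂, x₅, d12, d45, h1, h4, h2, h5,
            e14, h24.symm, e25, h15.symm, n12, n45⟩)
        · -- W5 : x₁ x₃ x₅ x₂ x₄
          refine Or.inr (Or.inr ⟨![x₁, x₃, x₅, x₂, x₄], ?_, ?_, ?_, ?_⟩)
          · intro i j h
            fin_cases i <;> fin_cases j <;>
              simp only [Matrix.cons_val_zero, Matrix.cons_val_one, Matrix.head_cons,
                Matrix.cons_val_two, Matrix.tail_cons, Matrix.cons_val_three,
                Matrix.cons_val_four, Fin.isValue] at h ⊢ <;>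
              first
                | rfl
                | exact absurd h (by assumption)
                | exact absurd h.symm (by assumption)
          · intro i; fin_cases i <;> simpa using by assumption
          · intro i; fin_cases i <;>
              simp only [Fin.isValue, Matrix.cons_val_zero, Matrix.cons_val_one] <;>
              first
                | exact h13 | exact h35 | exact e25.symm | exact h24 | exact e14.symm
                | simp <;> first | exact h13 | exact h35 | exact e25.symm | exact h24
                    | exact e14.symm
          · intro i; fin_cases i <;>
              simp only [Fin.isValue, Matrix.cons_val_zero, Matrix.cons_val_one] <;>
              first
                | exact h15
                | exact fun h => n23 h.symm
                | exact fun h => n45 h.symm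
                | exact fun h => n12 h.symm
                | exact fun h => n34 h.symm
                | simp <;>
                  first
                    | exact h15
                    | exact fun h => n23 h.symm
                    | exact fun h => n45 h.symm
                    | exact fun h => n12 h.symm
                    | exact fun h => n34 h.symm
      · exact Or.inl ⟨x₃, x₄, x₅, d34, d35, d45, h3, h4, h5, n34, h35, n45⟩
    · exact Or.inl ⟨x₂, x₃, x₄, d23, d24, d34, h2, h3, h4, n23, h24, n34⟩
  · exact Or.inl ⟨x₁, x₂, x₃, d12, d13, d23, h1, h2, h3, n12, h13, n23⟩
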